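/- Let Q : Matrix (Fin 7) (Fin 7) ℂ be the adjacency matrix of the extended Dynkin graph Ẽ_6, with vertex 0 the central vertex and three arms 0 — 1 — 2, 0 — 3 — 4, 0 — 5 — 6: Q i j = 1 (and Q j i = 1) exactly when {i, j} is one of {0,1}, {1,2}, {0,3}, {3,4}, {0,5}, {5,6}, and all other entries are 0. Then spectralRadius ℂ Q = 2. -/

import Mathlib

/-!
The vector `w = (3, 2, 1, 2, 1, 2, 1)` (centre, then the arms) is a positive eigenvector of `Q`
for the eigenvalue `2`, so `2` lies in the spectrum. Conversely, weighting the sup norm by `w`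
(Collatz–Wielandt): at a coordinate `i` maximising `‖v i‖ / w i` of an eigenvector `v`, the
eigenvalue equation gives `‖μ‖ ‖v i‖ ≤ ∑ⱼ ‖Q i j‖ ‖v j‖ ≤ 2 ‖v i‖`.
-/

open Matrix
open scoped NNReal ENNReal

theorem spectrum.nnnorm_le_spectralRadius {𝕜 A : Type*} [NormedField 𝕜] [Ring A] [Algebra 𝕜 A]
    {a : A} {μ : 𝕜} (hμ : μ ∈ spectrum 𝕜 a) : (‖μ‖₊ : ℝ≥0∞) ≤ spectralRadius 𝕜 a :=
  le_iSup₂ (f := fun k (_ : k ∈ spectrum 𝕜 a) => (‖k‖₊ : ℝ≥0∞)) μ hμ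

namespace Matrix

variable {n : Type*} [Fintype n]

theorem mem_spectrum_iff_exists_mulVec_eq_smul [DecidableEq n] {K : Type*} [Field K]
    {A : Matrix n n K} {μ : K} : μ ∈ spectrum K A ↔ ∃ v ≠ 0, A *ᵥ v = μ • v := by
  rw [spectrum.mem_iff, isUnit_iff_isUnit_det, isUnit_iff_ne_zero, not_not,
    ← exists_mulVec_eq_zero_iff]
  simp only [sub_mulVec, Algebra.algebraMap_eq_smul_one, smul_mulVec, one_mulVec, sub_eq_zero,
    eq_comm]

theorem norm_le_of_sum_norm_mul_le {𝕜 : Type*} [NormedField 𝕜] {A : Matrix n n 𝕜} {w : n → ℝ}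
    (hw : ∀ i, 0 < w i) {r : ℝ} (hA : ∀ i, ∑ j, ‖A i j‖ * w j ≤ r * w i) {v : n → 𝕜}
    (hv : v ≠ 0) {μ : 𝕜} (hAv : A *ᵥ v = μ • v) : ‖μ‖ ≤ r := by
  obtain ⟨j, hj⟩ := Function.ne_iff.mp hv
  have : Nonempty n := ⟨j⟩
  obtain ⟨i, hi⟩ := Finite.exists_max fun k => ‖v k‖ / w k
  set c := ‖v i‖ / w i
  have hvc : ∀ k, ‖v k‖ ≤ c * w k := fun k => (div_le_iff₀ (hw k)).mp (hi k)
  have hc : 0 < c := (div_pos (norm_pos_iff.mpr hj) (hw j)).trans_le (hi j)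
  have hvi : ‖v i‖ = c * w i := (div_mul_cancel₀ _ (hw i).ne').symm
  have key : ‖μ‖ * (c * w i) ≤ r * (c * w i) :=
    calc ‖μ‖ * (c * w i) = ‖(A *ᵥ v) i‖ := by
          rw [hAv, Pi.smul_apply, smul_eq_mul, norm_mul, hvi]
      _ ≤ ∑ k, ‖A i k‖ * ‖v k‖ := by
          simpa only [mulVec, dotProduct, norm_mul] using
            norm_sum_le Finset.univ fun k => A i k * v k
      _ ≤ ∑ k, ‖A i k‖ * (c * w k) := by gcongr with k; exact hvc k
      _ = c * ∑ k, ‖A i k‖ * w k := by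
          rw [Finset.mul_sum]; exact Finset.sum_congr rfl fun k _ => by ring
      _ ≤ c * (r * w i) := by gcongr; exact hA i
      _ = r * (c * w i) := by ring
  exact le_of_mul_le_mul_right key (mul_pos hc (hw i))

theorem spectralRadius_le_of_sum_norm_mul_le [DecidableEq n] {𝕜 : Type*} [NormedField 𝕜]
    {A : Matrix n n 𝕜} {w : n → ℝ} (hw : ∀ i, 0 < w i) {r : ℝ≥0}
    (hA : ∀ i, ∑ j, ‖A i j‖ * w j ≤ r * w i) :
    spectralRadius 𝕜 A ≤ r := by
  refine iSup₂_le fun μ hμ => ?_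
  obtain ⟨v, hv, hAv⟩ := mem_spectrum_iff_exists_mulVec_eq_smul.mp hμ
  exact ENNReal.coe_le_coe.mpr (norm_le_of_sum_norm_mul_le hw hA hv hAv)

end Matrix

/-- The adjacency matrix of the extended Dynkin graph `Ẽ_6` has spectral radius `2`.
Vertex `0` is the central vertex and the three arms are `0 — 1 — 2`, `0 — 3 — 4`,
`0 — 5 — 6`. -/
theorem spectralRadius_Etilde6_eq_two
    (Q : Matrix (Fin 7) (Fin 7) ℂ)
    (hQ : ∀ i j : Fin 7, Q i j =
      if (i.val, j.val) ∈
          ({(0, 1), (1, 0), (1, 2), (2, 1), (0, 3), (3, 0), (3, 4), (4, 3),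
            (0, 5), (5, 0), (5, 6), (6, 5)} : Finset (ℕ × ℕ))
      then 1 else 0) :
    spectralRadius ℂ Q = 2 := by
  let w : Fin 7 → ℝ := ![3, 2, 1, 2, 1, 2, 1]
  have hw : ∀ i, 0 < w i := by intro i; fin_cases i <;> norm_num [w]
  have hQw : ∀ i, ∑ j, ‖Q i j‖ * w j = 2 * w i := by
    intro i; fin_cases i <;> simp [Fin.sum_univ_seven, hQ, w, apply_ite norm] <;> norm_num
  have hQv : Q *ᵥ (fun i => (w i : ℂ)) = (2 : ℂ) • fun i => (w i : ℂ) := by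
    ext i; fin_cases i <;> simp [mulVec, dotProduct, Fin.sum_univ_seven, hQ, w] <;> norm_num
  have hv : (fun i => (w i : ℂ)) ≠ 0 := fun h => (hw 0).ne' (by simpa using congrFun h 0)
  apply le_antisymm
  · simpa using spectralRadius_le_of_sum_norm_mul_le (r := 2) hw fun i => (hQw i).le
  · simpa using spectrum.nnnorm_le_spectralRadius
      (mem_spectrum_iff_exists_mulVec_eq_smul.mpr ⟨_, hv, hQv⟩)
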